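/- Let V be a complex vector space, r: V⊗V → V⊗V a linear map satisfying the braid relation r_1 r_2 r_1 = r_2 r_1 r_2 (with r_1 = r⊗id, r_2 = id⊗r), and k: V → V a linear involution (k² = id) such that r k_2 r k_2 = k_2 r k_2 r where k_2 = id⊗k. Define R(u) = id + u·r and K(u) = u·k for u ∈ ℂ, and K_2(u) = id⊗K(u). Then for all u, v ∈ ℂ: K_2(v) R(u+v) K_2(u) R(u-v) = R(u-v) K_2(u) R(u+v) K_2(v). -/
import Mathlib


open TensorProduct LinearMap

/-- Theorem 5.1: for an involutive reflection k of a braided linear map r,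
K(u) = u·k and R(u) = id + u·r satisfy the parameter-dependent reflection
equation K₂(v)R(u+v)K₂(u)R(u-v) = R(u-v)K₂(u)R(u+v)K₂(v). -/
theorem statement17 {V : Type*} [AddCommGroup V] [Module ℂ V]
    (r : TensorProduct ℂ V V →ₗ[ℂ] TensorProduct ℂ V V)
    (k : V →ₗ[ℂ] V)
    (hbraid :
      ((TensorProduct.assoc ℂ V V V).toLinearMap ∘ₗ rTensor V r ∘ₗ
          (TensorProduct.assoc ℂ V V V).symm.toLinearMap) ∘ₗ
        lTensor V r ∘ₗ
        ((TensorProduct.assoc ℂ V V V).toLinearMap ∘ₗ rTensor V r ∘ₗ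
          (TensorProduct.assoc ℂ V V V).symm.toLinearMap) =
      lTensor V r ∘ₗ
        ((TensorProduct.assoc ℂ V V V).toLinearMap ∘ₗ rTensor V r ∘ₗ
          (TensorProduct.assoc ℂ V V V).symm.toLinearMap) ∘ₗ
        lTensor V r)
    (hk : k ∘ₗ k = LinearMap.id)
    (hrk : r ∘ₗ lTensor V k ∘ₗ r ∘ₗ lTensor V k =
      lTensor V k ∘ₗ r ∘ₗ lTensor V k ∘ₗ r) :
    ∀ u v : ℂ,
      (v • lTensor V k) ∘ₗ (LinearMap.id + (u + v) • r) ∘ₗ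
          (u • lTensor V k) ∘ₗ (LinearMap.id + (u - v) • r) =
        (LinearMap.id + (u - v) • r) ∘ₗ (u • lTensor V k) ∘ₗ
          (LinearMap.id + (u + v) • r) ∘ₗ (v • lTensor V k) := by
  intro u v
  set K := lTensor V k with hKdef
  have hKK : K ∘ₗ K = LinearMap.id := by
    rw [hKdef, ← lTensor_comp, hk, lTensor_id]
  simp only [comp_add, add_comp, comp_smul, smul_comp, comp_id, id_comp, comp_assoc, smul_add,
    smul_smul]
  rw [show K ∘ₗ (K ∘ₗ r) = r by rw [← comp_assoc, hKK, id_comp],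
    hKK, comp_id, ← hrk,
    show r ∘ₗ K ∘ₗ r ∘ₗ K = (r ∘ₗ K ∘ₗ r) ∘ₗ K by simp [comp_assoc]]
  module
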